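/- arXiv:math/0111178 — 2 statements merged into one kernel-verified Lean document; each statement's English description precedes it below -/
import Mathlib

section
/- Liouville's theorem on Diophantine approximation: If ω is an irrational root of a polynomial P with integer coefficients of degree n ≥ 2, and k with 0 ≤ k ≤ n-2 is such that P(ω) = P'(ω) = ⋯ = P^{(k)}(ω) = 0 but P^{(k+1)}(ω) ≠ 0, then there exists C > 0 such that |ω - p/q| ≥ C/|q|^{n/(k+1)} for all relatively prime integers p, q with q ≠ 0. In particular, quadratic irrationals ω satisfy |ω - p/q| ≥ C/q² for some C > 0. -/
/-!
Let `r ≥ k + 1` be the multiplicity of `ω` as a root of `P`, and write `P = (X - ω)^r g`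
with `g(ω) ≠ 0`. Near `ω`, `|g| ≤ M` and `g` has no zero, and since `ω` is irrational,
`P(p/q) ≠ 0` for `p/q` close to `ω`. Clearing denominators, `|q|^n |P(p/q)|` is a nonzero
integer, so `1 ≤ |q|^n |ω - p/q|^(k+1) M`, and taking `(k+1)`-th roots gives the bound. The
quadratic case follows because `|q|^(2/(k+1)) ≤ q^2`.
-/

open Polynomial Filter Topology

namespace Polynomial

theorem lt_rootMultiplicity_map_of_aeval_iterate_derivative_eq_zero {A : Type*} [CommRing A]
    [IsDomain A] [CharZero A] {P : ℤ[X]} {a : A} {k : ℕ} (hP : P ≠ 0)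
    (h : ∀ j ≤ k, aeval a (derivative^[j] P) = 0) :
    k < (P.map (algebraMap ℤ A)).rootMultiplicity a :=
  lt_rootMultiplicity_of_isRoot_iterate_derivative
    ((Polynomial.map_ne_zero_iff (algebraMap ℤ A).injective_int).2 hP) fun j hj => by
      rw [IsRoot, iterate_derivative_map, eval_map_algebraMap]
      exact h j hj

theorem one_le_abs_pow_mul_abs_eval_div {K : Type*} [Field K] [LinearOrder K]
    [IsStrictOrderedRing K] {f : ℤ[X]} {a b : ℤ} (hb : b ≠ 0)
    (hf : eval ((a : K) / b) (f.map (algebraMap ℤ K)) ≠ 0) :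
    (1 : K) ≤ |(b : K)| ^ f.natDegree * |eval ((a : K) / b) (f.map (algebraMap ℤ K))| := by
  rcases hb.lt_or_gt with hneg | hpos
  · have hdiv : ((-a : ℤ) : K) / ((-b : ℤ) : K) = (a : K) / b := by
      push_cast; exact neg_div_neg_eq _ _
    have := one_le_pow_mul_abs_eval_div (K := K) (neg_pos.2 hneg) (hdiv ▸ hf)
    rwa [hdiv, Int.cast_neg, ← abs_of_neg (Int.cast_lt_zero.2 hneg)] at this
  · rw [abs_of_pos (Int.cast_pos.2 hpos)]
    exact one_le_pow_mul_abs_eval_div hpos hf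

theorem exists_pos_eventually_norm_eval_le_mul_pow {𝕜 : Type*} [NormedField 𝕜]
    {Q : 𝕜[X]} (hQ : Q ≠ 0) (a : 𝕜) {m : ℕ} (hm : m ≤ Q.rootMultiplicity a) :
    ∃ M > 0, ∀ᶠ x in 𝓝 a, (x ≠ a → Q.eval x ≠ 0) ∧ ‖Q.eval x‖ ≤ M * ‖x - a‖ ^ m := by
  set r := Q.rootMultiplicity a
  set g := Q /ₘ (X - C a) ^ r
  have hfac (x : 𝕜) : Q.eval x = (x - a) ^ r * g.eval x := by
    conv_lhs => rw [← pow_mul_divByMonic_rootMultiplicity_eq Q a]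
    simp [g, r]
  have hga : g.eval a ≠ 0 := eval_divByMonic_pow_rootMultiplicity_ne_zero a hQ
  refine ⟨‖g.eval a‖ + 1, by positivity, ?_⟩
  filter_upwards [(g.continuous.tendsto a).eventually_ne hga,
    (g.continuous.norm.tendsto a).eventually (eventually_lt_nhds (lt_add_one _)),
    Metric.ball_mem_nhds a one_pos] with x hg0 hgM hx1
  refine ⟨fun hx => ?_, ?_⟩
  · rw [hfac]
    exact mul_ne_zero (pow_ne_zero _ (sub_ne_zero.2 hx)) hg0
  · have hxr : ‖x - a‖ ^ r ≤ ‖x - a‖ ^ m :=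
      pow_le_pow_of_le_one (norm_nonneg _) (mem_ball_iff_norm.1 hx1).le hm
    rw [hfac, norm_mul, norm_pow, mul_comm]
    gcongr

end Polynomial

theorem Real.inv_rpow_inv_div_rpow_le_of_one_le_mul {x M D : ℝ} {n m : ℕ} (hx : 0 < x)
    (hM : 0 < M) (hD : 0 ≤ D) (hm : m ≠ 0) (h : 1 ≤ x ^ n * (D ^ m * M)) :
    M⁻¹ ^ (m⁻¹ : ℝ) / x ^ ((n : ℝ) / m) ≤ D := by
  have hm' : (0 : ℝ) < m := by positivity
  rw [div_eq_mul_inv (n : ℝ), Real.rpow_natCast_mul hx.le, ← Real.div_rpow (by positivity)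
    (by positivity), Real.rpow_inv_le_iff_of_pos (by positivity) hD hm', Real.rpow_natCast,
    div_le_iff₀ (by positivity), inv_le_iff_one_le_mul₀ hM]
  linarith

theorem Irrational.exists_pos_le_abs_sub_div_of_le_rootMultiplicity {ω : ℝ}
    (hω : Irrational ω) {P : ℤ[X]} (hP : P ≠ 0) {m : ℕ} (hm0 : m ≠ 0)
    (hm : m ≤ (P.map (algebraMap ℤ ℝ)).rootMultiplicity ω) :
    ∃ C > 0, ∀ p q : ℤ, q ≠ 0 →
      C / |(q : ℝ)| ^ ((P.natDegree : ℝ) / m) ≤ |ω - (p : ℝ) / (q : ℝ)| := by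
  obtain ⟨M, hM, hnear⟩ := exists_pos_eventually_norm_eval_le_mul_pow
    ((Polynomial.map_ne_zero_iff (algebraMap ℤ ℝ).injective_int).2 hP) ω hm
  obtain ⟨δ, hδ, hball⟩ := Metric.eventually_nhds_iff.1 hnear
  set C := min δ (M⁻¹ ^ (m⁻¹ : ℝ))
  refine ⟨C, by positivity, fun p q hq => ?_⟩
  have hq1 : 1 ≤ |(q : ℝ)| := by exact_mod_cast Int.one_le_abs hq
  set D := |ω - (p : ℝ) / q|
  by_cases hfar : δ ≤ D
  · calc C / |(q : ℝ)| ^ ((P.natDegree : ℝ) / m)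
        ≤ C := div_le_self (by positivity) (Real.one_le_rpow hq1 (by positivity))
      _ ≤ D := (min_le_left _ _).trans hfar
  have hpq : (p : ℝ) / q ≠ ω := ((irrational_iff_ne_rational ω).1 hω p q hq).symm
  obtain ⟨hne, hle⟩ := hball (by rw [Real.dist_eq, abs_sub_comm]; linarith)
  rw [Real.norm_eq_abs, Real.norm_eq_abs, abs_sub_comm] at hle
  have hbound : 1 ≤ |(q : ℝ)| ^ P.natDegree * (D ^ m * M) :=
    calc 1 ≤ |(q : ℝ)| ^ P.natDegree * |(P.map (algebraMap ℤ ℝ)).eval ((p : ℝ) / q)| :=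
          one_le_abs_pow_mul_abs_eval_div hq (hne hpq)
      _ ≤ |(q : ℝ)| ^ P.natDegree * (D ^ m * M) := by rw [mul_comm _ M]; gcongr
  calc C / |(q : ℝ)| ^ ((P.natDegree : ℝ) / m)
      ≤ M⁻¹ ^ (m⁻¹ : ℝ) / |(q : ℝ)| ^ ((P.natDegree : ℝ) / m) := by
        gcongr
        exact min_le_right _ _
    _ ≤ D := Real.inv_rpow_inv_div_rpow_le_of_one_le_mul (by positivity) hM (abs_nonneg _) hm0
        hbound

theorem liouville_diophantine_general (P : Polynomial ℤ) (ω : ℝ)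
    (hω : Irrational ω)
    (k : ℕ)
    (hvanish : ∀ j ≤ k, Polynomial.aeval ω (Polynomial.derivative^[j] P) = 0)
    (hne : Polynomial.aeval ω (Polynomial.derivative^[k + 1] P) ≠ 0) :
    (∃ C : ℝ, 0 < C ∧ ∀ p q : ℤ, q ≠ 0 → Int.gcd p q = 1 →
      C / |(q : ℝ)| ^ ((P.natDegree : ℝ) / ((k : ℝ) + 1)) ≤ |ω - (p : ℝ) / (q : ℝ)|) ∧
    (P.natDegree = 2 →
      ∃ C : ℝ, 0 < C ∧ ∀ p q : ℤ, q ≠ 0 → Int.gcd p q = 1 →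
        C / (q : ℝ) ^ 2 ≤ |ω - (p : ℝ) / (q : ℝ)|) := by
  have hP : P ≠ 0 := by rintro rfl; simp at hne
  obtain ⟨C, hC, hCω⟩ :=
    hω.exists_pos_le_abs_sub_div_of_le_rootMultiplicity hP k.succ_ne_zero
      (lt_rootMultiplicity_map_of_aeval_iterate_derivative_eq_zero hP hvanish)
  push_cast at hCω
  refine ⟨⟨C, hC, fun p q hq _ => hCω p q hq⟩, fun hdeg => ⟨C, hC, fun p q hq _ => ?_⟩⟩
  have hq1 : 1 ≤ |(q : ℝ)| := by exact_mod_cast Int.one_le_abs hq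
  calc C / (q : ℝ) ^ 2 = C / |(q : ℝ)| ^ (2 : ℝ) := by rw [Real.rpow_two, sq_abs]
    _ ≤ C / |(q : ℝ)| ^ ((2 : ℝ) / ((k : ℝ) + 1)) := by
      gcongr
      exact div_le_self zero_le_two (le_add_of_nonneg_left k.cast_nonneg)
    _ ≤ |ω - (p : ℝ) / (q : ℝ)| := by simpa [hdeg] using hCω p q hq

/-- Liouville's theorem on Diophantine approximation: if `ω` is an irrational root
of an integer polynomial `P` of degree `n ≥ 2`, with `P(ω) = ⋯ = P^{(k)}(ω) = 0`
and `P^{(k+1)}(ω) ≠ 0` for some `0 ≤ k ≤ n-2`, then there is `C > 0` with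
`|ω - p/q| ≥ C/|q|^{n/(k+1)}` for all coprime integers `p, q`, `q ≠ 0`.
In particular (case `n = 2`, `k = 0`), quadratic irrationals satisfy
`|ω - p/q| ≥ C/q²`. -/
theorem liouville_diophantine (P : Polynomial ℤ) (ω : ℝ)
    (hdeg : 2 ≤ P.natDegree) (hω : Irrational ω)
    (k : ℕ) (hk : k ≤ P.natDegree - 2)
    (hvanish : ∀ j ≤ k, Polynomial.aeval ω (Polynomial.derivative^[j] P) = 0)
    (hne : Polynomial.aeval ω (Polynomial.derivative^[k + 1] P) ≠ 0) :
    (∃ C : ℝ, 0 < C ∧ ∀ p q : ℤ, q ≠ 0 → Int.gcd p q = 1 →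
      C / |(q : ℝ)| ^ ((P.natDegree : ℝ) / ((k : ℝ) + 1)) ≤ |ω - (p : ℝ) / (q : ℝ)|) ∧
    (P.natDegree = 2 →
      ∃ C : ℝ, 0 < C ∧ ∀ p q : ℤ, q ≠ 0 → Int.gcd p q = 1 →
        C / (q : ℝ) ^ 2 ≤ |ω - (p : ℝ) / (q : ℝ)|) :=
  liouville_diophantine_general P ω hω k hvanish hne
end

section
/- Let h: ℝ → ℂ be a C^r 2π-periodic function with zero average, with Fourier coefficients satisfying |h_k| ≤ ‖h‖_{C^r}/|k|^r. Let ω be Diophantine of type (C,ν) with r > ν + 1. Then the difference equation u(ψ + 2πω) - u(ψ) = h(ψ) has a continuous 2π-periodic zero-average solution u given by the Fourier series u(ψ) = Σ_{k≠0} h_k·e^{ikψ}/(e^{2πikω} - 1), and ‖u‖_{C⁰} ≤ ζ(r - ν)·‖h‖_{C^r}/(4C) · 2, i.e., the sup norm of u is bounded by (ζ(r-ν)/(2C))·‖h‖_{C^r}. -/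
open Complex

/-!
Dividing the Fourier coefficients of `h` by the small divisors `e^{2πikω} - 1` solves the
equation mode by mode, since translation by `2πω` multiplies the mode `e^{ikψ}` by `e^{2πikω}`.
The Diophantine condition costs a factor `|k|^ν`, so the new coefficients are
`O(|k|^{-(r-ν)})` with `r - ν > 1`: the series converges absolutely and uniformly, giving a
continuous periodic solution whose sup norm is at most the sum of the coefficient bounds,
`2 ζ(r-ν) ‖h‖_{C^r} / (4C)`.
-/

section FourierSum

noncomputable def fourierSum (b : ℤ → ℂ) (ψ : ℝ) : ℂ :=
  ∑' k : ℤ, b k * exp (I * k * ψ)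

lemma norm_mul_exp_I_int_mul (c : ℂ) (k : ℤ) (ψ : ℝ) : ‖c * exp (I * k * ψ)‖ = ‖c‖ := by
  rw [norm_mul, norm_exp]; simp [mul_re]

lemma exp_I_int_mul_add (k : ℤ) (ψ t : ℝ) :
    exp (I * k * ↑(ψ + t)) = exp (I * k * ψ) * exp (I * k * t) := by
  rw [← exp_add]; push_cast; ring_nf

lemma exp_I_int_mul_two_pi (k : ℤ) : exp (I * k * ↑(2 * Real.pi)) = 1 := by
  rw [← exp_int_mul_two_pi_mul_I k]; push_cast; ring_nf

lemma integral_exp_I_int_mul (k : ℤ) :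
    ∫ ψ in (0 : ℝ)..(2 * Real.pi), exp (I * k * ψ) = if k = 0 then (2 * Real.pi : ℂ) else 0 := by
  split_ifs with hk
  · simp [hk]
  · have hIk : I * k ≠ 0 := by simp [hk]
    rw [integral_exp_mul_complex hIk, exp_I_int_mul_two_pi]
    simp

variable {b : ℤ → ℂ}

lemma hasSum_fourierSum (hb : Summable fun k => ‖b k‖) (ψ : ℝ) :
    HasSum (fun k : ℤ => b k * exp (I * k * ψ)) (fourierSum b ψ) :=
  (hb.of_norm_bounded fun k => (norm_mul_exp_I_int_mul _ k ψ).le).hasSum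

lemma continuous_fourierSum (hb : Summable fun k => ‖b k‖) : Continuous (fourierSum b) :=
  continuous_tsum (fun k => by fun_prop) hb
    fun k ψ => (norm_mul_exp_I_int_mul _ k ψ).le

lemma fourierSum_add_two_pi (b : ℤ → ℂ) (ψ : ℝ) :
    fourierSum b (ψ + 2 * Real.pi) = fourierSum b ψ := by
  simp only [fourierSum, exp_I_int_mul_add, exp_I_int_mul_two_pi, mul_one]

lemma integral_fourierSum (hb : Summable fun k => ‖b k‖) :
    ∫ ψ in (0 : ℝ)..(2 * Real.pi), fourierSum b ψ = 2 * Real.pi * b 0 := by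
  have hterms := intervalIntegral.hasSum_integral_of_dominated_convergence
    (μ := MeasureTheory.volume) (a := 0) (b := 2 * Real.pi) (fun k _ => ‖b k‖)
    (fun k => by fun_prop)
    (fun k => .of_forall fun ψ _ => (norm_mul_exp_I_int_mul _ k ψ).le)
    (.of_forall fun _ _ => hb) intervalIntegrable_const
    (.of_forall fun ψ _ => hasSum_fourierSum hb ψ)
  refine hterms.unique ((hasSum_ite_eq 0 (2 * Real.pi * b 0)).congr_fun fun k => ?_)
  rw [intervalIntegral.integral_const_mul, integral_exp_I_int_mul]
  split_ifs with hk
  · rw [hk, mul_comm]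
  · exact mul_zero _

lemma fourierSum_add_sub_eq {a : ℤ → ℂ} {t : ℝ} {y : ℂ} (hb : Summable fun k => ‖b k‖)
    (hab : ∀ k : ℤ, b k * (exp (I * k * t) - 1) = a k) {ψ : ℝ}
    (ha : HasSum (fun k : ℤ => a k * exp (I * k * ψ)) y) :
    fourierSum b (ψ + t) - fourierSum b ψ = y :=
  ((hasSum_fourierSum hb (ψ + t)).sub (hasSum_fourierSum hb ψ)).unique
    (ha.congr_fun fun k => by rw [← hab, exp_I_int_mul_add]; ring)

lemma norm_fourierSum_le {g : ℤ → ℝ} {A : ℝ} (hg : HasSum g A) (hbg : ∀ k, ‖b k‖ ≤ g k)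
    (ψ : ℝ) : ‖fourierSum b ψ‖ ≤ A :=
  tsum_of_norm_bounded hg fun k => (norm_mul_exp_I_int_mul _ k ψ).trans_le (hbg k)

end FourierSum

lemma hasSum_abs_int_rpow_neg {p : ℝ} (hp : 1 < p) :
    HasSum (fun k : ℤ => |(k : ℝ)| ^ (-p)) (2 * ∑' q : ℕ, ((q : ℝ) + 1) ^ (-p)) := by
  have hnat : HasSum (fun q : ℕ => ((q : ℝ) + 1) ^ (-p)) (∑' q : ℕ, ((q : ℝ) + 1) ^ (-p)) := by
    refine Summable.hasSum ?_
    simpa using (summable_nat_add_iff 1).2 (Real.summable_nat_rpow.2 (neg_lt_neg hp))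
  have hpos : HasSum (fun q : ℕ => |(((q + 1 : ℤ)) : ℝ)| ^ (-p))
      (∑' q : ℕ, ((q : ℝ) + 1) ^ (-p)) := by
    refine hnat.congr_fun fun q => ?_
    push_cast; rw [abs_of_pos (by positivity)]
  have hneg : HasSum (fun q : ℕ => |(((-(q + 1) : ℤ)) : ℝ)| ^ (-p))
      (∑' q : ℕ, ((q : ℝ) + 1) ^ (-p)) := by
    refine hnat.congr_fun fun q => ?_
    push_cast; rw [abs_neg, abs_of_pos (by positivity)]
  -- the `k = 0` term is `0 ^ (-p) = 0`
  convert HasSum.of_add_one_of_neg_add_one (f := fun k : ℤ => |(k : ℝ)| ^ (-p)) hpos hneg using 1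
  rw [Int.cast_zero, abs_zero, Real.zero_rpow (neg_ne_zero.2 (by positivity))]
  ring

lemma norm_div_le_mul_rpow_neg {a d : ℂ} {x M c r ν : ℝ} (hx : 0 < x) (hc : 0 < c)
    (ha : ‖a‖ ≤ M / x ^ r) (hd : c / x ^ ν ≤ ‖d‖) :
    ‖a / d‖ ≤ M / c * x ^ (-(r - ν)) := by
  calc ‖a / d‖ = ‖a‖ / ‖d‖ := norm_div a d
    _ ≤ M / x ^ r / (c / x ^ ν) := div_le_div₀ ((norm_nonneg a).trans ha) ha (by positivity) hd
    _ = M / c * x ^ (-(r - ν)) := by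
      rw [neg_sub, Real.rpow_sub hx, div_div_div_comm, div_div_eq_mul_div, mul_div_assoc]

theorem difference_equation_solution_general (ω C ν : ℝ) (r : ℕ) (hC : 0 < C)
    (hrν : ν + 1 < (r : ℝ))
    (hden : ∀ k : ℤ, k ≠ 0 →
      4 * C / |(k : ℝ)| ^ ν ≤
        ‖Complex.exp (2 * Real.pi * Complex.I * (k : ℂ) * (ω : ℂ)) - 1‖)
    (h : ℝ → ℂ) (a : ℤ → ℂ) (M : ℝ)
    (ha0 : a 0 = 0)
    (hrep : ∀ ψ : ℝ,
      HasSum (fun k : ℤ => a k * Complex.exp (Complex.I * (k : ℂ) * (ψ : ℂ))) (h ψ))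
    (hbound : ∀ k : ℤ, k ≠ 0 → ‖a k‖ ≤ M / |(k : ℝ)| ^ (r : ℝ)) :
    ∃ u : ℝ → ℂ,
      Continuous u ∧
      (∀ ψ : ℝ, u (ψ + 2 * Real.pi) = u ψ) ∧
      (∫ ψ in (0 : ℝ)..(2 * Real.pi), u ψ) = 0 ∧
      (∀ ψ : ℝ, u (ψ + 2 * Real.pi * ω) - u ψ = h ψ) ∧
      (∀ ψ : ℝ,
        HasSum (fun k : ℤ =>
          if k = 0 then 0 else
            a k * Complex.exp (Complex.I * (k : ℂ) * (ψ : ℂ)) /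
              (Complex.exp (2 * Real.pi * Complex.I * (k : ℂ) * (ω : ℂ)) - 1))
          (u ψ)) ∧
      (∀ ψ : ℝ,
        ‖u ψ‖ ≤
          (∑' q : ℕ, ((q : ℝ) + 1) ^ (-(((r : ℝ)) - ν))) / (2 * C) * M) := by
  have hp : 1 < (r : ℝ) - ν := by linarith
  set d : ℤ → ℂ := fun k => exp (2 * Real.pi * I * k * ω) - 1
  set b : ℤ → ℂ := fun k => if k = 0 then 0 else a k / d k
  have hd : ∀ k ≠ 0, d k ≠ 0 := fun k hk => by
    have hk' : (0 : ℝ) < |(k : ℝ)| := abs_pos.2 (Int.cast_ne_zero.2 hk)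
    exact norm_pos_iff.1 ((div_pos (by positivity) (Real.rpow_pos_of_pos hk' ν)).trans_le
      (hden k hk))
  have hbd : ∀ k, b k * (exp (I * k * ↑(2 * Real.pi * ω)) - 1) = a k := fun k => by
    have hshift : exp (I * k * ↑(2 * Real.pi * ω)) - 1 = d k := by
      simp only [d]; push_cast; ring_nf
    by_cases hk : k = 0
    · simp [b, hk, ha0]
    · simp only [b, if_neg hk, hshift, div_mul_cancel₀ _ (hd k hk)]
  have hbg : ∀ k, ‖b k‖ ≤ M / (4 * C) * |(k : ℝ)| ^ (-((r : ℝ) - ν)) := fun k => by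
    by_cases hk : k = 0
    · simp only [b, hk, if_true, norm_zero, Int.cast_zero, abs_zero,
        Real.zero_rpow (neg_ne_zero.2 (by linarith : (r : ℝ) - ν ≠ 0)), mul_zero, le_refl]
    · simpa [b, hk] using norm_div_le_mul_rpow_neg (abs_pos.2 (Int.cast_ne_zero.2 hk))
        (by positivity) (hbound k hk) (hden k hk)
  have hg := (hasSum_abs_int_rpow_neg hp).mul_left (M / (4 * C))
  have hb : Summable fun k => ‖b k‖ := hg.summable.of_nonneg_of_le (fun _ => norm_nonneg _) hbg
  refine ⟨fourierSum b, continuous_fourierSum hb, fourierSum_add_two_pi b, ?_,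
    fun ψ => fourierSum_add_sub_eq hb hbd (hrep ψ), fun ψ => ?_,
    fun ψ => (norm_fourierSum_le hg hbg ψ).trans_eq ?_⟩
  · simp [integral_fourierSum hb, b]
  · refine (hasSum_fourierSum hb ψ).congr_fun fun k => ?_
    by_cases hk : k = 0
    · simp [b, hk]
    · simp only [b, d, if_neg hk, mul_div_right_comm]
  · field_simp; ring

/-- Solution of the difference equation `u(ψ + 2πω) - u(ψ) = h(ψ)` for a `C^r`
`2π`-periodic zero-average function `h` with Fourier coefficients bounded by
`‖h‖_{C^r}/|k|^r`, and `ω` Diophantine of type `(C,ν)` with `r > ν + 1`: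
there is a continuous `2π`-periodic zero-average solution `u`, given by the
Fourier series `u(ψ) = Σ_{k≠0} h_k e^{ikψ}/(e^{2πikω} - 1)`, with
`‖u‖_{C⁰} ≤ (ζ(r-ν)/(2C)) ‖h‖_{C^r}`. -/
theorem difference_equation_solution (ω C ν : ℝ) (r : ℕ) (hC : 0 < C)
    (hν : 1 ≤ ν) (hrν : ν + 1 < (r : ℝ))
    (hden : ∀ k : ℤ, k ≠ 0 →
      4 * C / |(k : ℝ)| ^ ν ≤
        ‖Complex.exp (2 * Real.pi * Complex.I * (k : ℂ) * (ω : ℂ)) - 1‖)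
    (h : ℝ → ℂ) (a : ℤ → ℂ) (M : ℝ)
    (ha0 : a 0 = 0)
    (hrep : ∀ ψ : ℝ,
      HasSum (fun k : ℤ => a k * Complex.exp (Complex.I * (k : ℂ) * (ψ : ℂ))) (h ψ))
    (hbound : ∀ k : ℤ, k ≠ 0 → ‖a k‖ ≤ M / |(k : ℝ)| ^ (r : ℝ)) :
    ∃ u : ℝ → ℂ,
      Continuous u ∧
      (∀ ψ : ℝ, u (ψ + 2 * Real.pi) = u ψ) ∧
      (∫ ψ in (0 : ℝ)..(2 * Real.pi), u ψ) = 0 ∧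
      (∀ ψ : ℝ, u (ψ + 2 * Real.pi * ω) - u ψ = h ψ) ∧
      (∀ ψ : ℝ,
        HasSum (fun k : ℤ =>
          if k = 0 then 0 else
            a k * Complex.exp (Complex.I * (k : ℂ) * (ψ : ℂ)) /
              (Complex.exp (2 * Real.pi * Complex.I * (k : ℂ) * (ω : ℂ)) - 1))
          (u ψ)) ∧
      (∀ ψ : ℝ,
        ‖u ψ‖ ≤
          (∑' q : ℕ, ((q : ℝ) + 1) ^ (-(((r : ℝ)) - ν))) / (2 * C) * M) :=
  difference_equation_solution_general ω C ν r hC hrν hden h a M ha0 hrep hbound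
end
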